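/- arXiv:2604.02588 — 2 statements merged into one kernel-verified Lean document; each statement's English description precedes it below -/
import Mathlib

section
/- Let X be a separable Banach lattice and suppose the set X_{↓0} = {(z_n) ∈ X^ℕ : z_1 ≥ z_2 ≥ … ≥ 0 and inf_n z_n = 0} is a Borel subset of X^ℕ (with the product topology). Then the set {((x_n), x) ∈ X^ℕ × X : (x_n) σ-order converges to x} is an analytic subset of X^ℕ × X. -/
open MeasureTheory

/-- The set of decreasing positive sequences in `X` whose range has `0` as greatest lower
bound. -/
def XDownZero (X : Type*) [NormedAddCommGroup X] [Lattice X] [HasSolidNorm X]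
    [IsOrderedAddMonoid X] : Set (ℕ → X) :=
  {z | Antitone z ∧ (∀ n, 0 ≤ z n) ∧ IsGLB (Set.range z) 0}

/-- A sequence `(x n)` in a Banach lattice σ-order converges to `l` if there exists a decreasing
sequence `z 0 ≥ z 1 ≥ … ≥ 0` whose range has `0` as its greatest lower bound, such that for every
`m`, `|x n - l| ≤ z m` for all but finitely many `n`. -/
def SigmaOrderConvergesTo {X : Type*} [NormedAddCommGroup X] [Lattice X] [HasSolidNorm X]
    [IsOrderedAddMonoid X] (x : ℕ → X) (l : X) : Prop :=
  ∃ z : ℕ → X, Antitone z ∧ (∀ m, 0 ≤ z m) ∧ IsGLB (Set.range z) 0 ∧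
    ∀ m, ∀ᶠ n in Filter.atTop, |x n - l| ≤ z m

/-!
The set is the projection of the set of triples `((x, l), z)` with `z ∈ X_{↓0}` and, for every `m`,
`|x n - l| ≤ z m` for all large `n`. The second condition is a countable union/intersection of
closed sets, since the lattice operations are continuous, so that set is Borel in the Polish space
`(X^ℕ × X) × X^ℕ`, hence analytic, and continuous images of analytic sets are analytic.
-/

open Filter

theorem measurableSet_setOf_forall_eventually_le {α β : Type*} [TopologicalSpace α]
    [MeasurableSpace α] [OpensMeasurableSpace α] [TopologicalSpace β] [Preorder β]
    [OrderClosedTopology β] {f g : ℕ → α → β} (hf : ∀ n, Continuous (f n))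
    (hg : ∀ m, Continuous (g m)) :
    MeasurableSet {a | ∀ m, ∀ᶠ n in atTop, f n a ≤ g m a} := by
  simp only [eventually_atTop, Set.ofPred_forall, Set.ofPred_exists]
  exact .iInter fun m => .iUnion fun N => .iInter fun n => .iInter fun _ =>
    (isClosed_le (hf n) (hg m)).measurableSet

section

variable {X : Type*} [NormedAddCommGroup X] [Lattice X] [HasSolidNorm X] [IsOrderedAddMonoid X]

theorem setOf_sigmaOrderConvergesTo_eq_image_fst :
    {p : (ℕ → X) × X | SigmaOrderConvergesTo p.1 p.2} =
      Prod.fst '' {q : ((ℕ → X) × X) × (ℕ → X) |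
        q.2 ∈ XDownZero X ∧ ∀ m, ∀ᶠ n in atTop, |q.1.1 n - q.1.2| ≤ q.2 m} := by
  ext p
  constructor
  · rintro ⟨z, hanti, hnonneg, hglb, hdom⟩
    exact ⟨(p, z), ⟨⟨hanti, hnonneg, hglb⟩, hdom⟩, rfl⟩
  · rintro ⟨⟨p, z⟩, ⟨⟨hanti, hnonneg, hglb⟩, hdom⟩, rfl⟩
    exact ⟨z, hanti, hnonneg, hglb, hdom⟩

theorem measurableSet_setOf_forall_eventually_abs_sub_le
    [MeasurableSpace (((ℕ → X) × X) × (ℕ → X))]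
    [OpensMeasurableSpace (((ℕ → X) × X) × (ℕ → X))] :
    MeasurableSet {q : ((ℕ → X) × X) × (ℕ → X) |
      ∀ m, ∀ᶠ n in atTop, |q.1.1 n - q.1.2| ≤ q.2 m} := by
  refine measurableSet_setOf_forall_eventually_le (fun n => ?_) fun m => by fun_prop
  have hsub : Continuous fun q : ((ℕ → X) × X) × (ℕ → X) => q.1.1 n - q.1.2 := by fun_prop
  exact hsub.sup hsub.neg

end

theorem stmt15_general {X : Type*} [NormedAddCommGroup X] [Lattice X] [HasSolidNorm X]
    [IsOrderedAddMonoid X] [CompleteSpace X] [TopologicalSpace.SeparableSpace X]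
    (hBorel : MeasurableSet[borel (ℕ → X)] (XDownZero X)) :
    MeasureTheory.AnalyticSet {p : (ℕ → X) × X | SigmaOrderConvergesTo p.1 p.2} := by
  borelize (ℕ → X) (((ℕ → X) × X) × (ℕ → X))
  rw [setOf_sigmaOrderConvergesTo_eq_image_fst]
  refine (MeasurableSet.analyticSet ?_).image_of_continuous continuous_fst
  exact (continuous_snd.measurable hBorel).inter measurableSet_setOf_forall_eventually_abs_sub_le

theorem stmt15 {X : Type*} [NormedAddCommGroup X] [Lattice X] [HasSolidNorm X]
    [IsOrderedAddMonoid X] [NormedSpace ℝ X] [CompleteSpace X]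
    [PosSMulStrictMono ℝ X] [PosSMulReflectLT ℝ X] [TopologicalSpace.SeparableSpace X]
    (hBorel : MeasurableSet[borel (ℕ → X)] (XDownZero X)) :
    MeasureTheory.AnalyticSet {p : (ℕ → X) × X | SigmaOrderConvergesTo p.1 p.2} :=
  stmt15_general hBorel
end

section
/- Let X be a separable Banach lattice and suppose the set {((x_n), x) ∈ X^ℕ × X : (x_n) σ-order converges to x} is an analytic subset of X^ℕ × X. Then the set X_{↓0} = {(z_n) ∈ X^ℕ : z_1 ≥ z_2 ≥ … ≥ 0 and inf_n z_n = 0} is a Borel subset of X^ℕ (with the product topology). -/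
/-!
An antitone nonnegative sequence lies in `X_{↓0}` iff it σ-order converges to `0` (it dominates
itself), so `X_{↓0}` is a closed set intersected with a continuous preimage of the analytic set of
σ-order convergent pairs. Its complement is always analytic: a sequence outside
`X_{↓0}` either leaves the closed set of antitone nonnegative sequences, or has a lower bound `b`
with `b ≰ 0`, so the complement is the projection of a Borel subset of `X^ℕ × X`. Suslin's theorem
concludes.
-/

open MeasureTheory

open Set

namespace MeasureTheory

variable {α : Type*} [TopologicalSpace α] {s t : Set α}

theorem AnalyticSet.inter [T2Space α] (hs : AnalyticSet s) (ht : AnalyticSet t) :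
    AnalyticSet (s ∩ t) := by
  rw [inter_eq_iInter]
  exact AnalyticSet.iInter (by rintro (_ | _) <;> assumption)

theorem AnalyticSet.union (hs : AnalyticSet s) (ht : AnalyticSet t) : AnalyticSet (s ∪ t) := by
  rw [union_eq_iUnion]
  exact AnalyticSet.iUnion (by rintro (_ | _) <;> assumption)

end MeasureTheory

theorem isClosed_setOf_antitone_and_nonneg {ι α : Type*} [Preorder ι] [TopologicalSpace α]
    [Preorder α] [Zero α] [OrderClosedTopology α] :
    IsClosed {f : ι → α | Antitone f ∧ 0 ≤ f} :=
  isClosed_antitone.inter isClosed_Ici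

section BanachLattice

variable {X : Type*} [NormedAddCommGroup X] [Lattice X] [HasSolidNorm X] [IsOrderedAddMonoid X]

theorem Antitone.sigmaOrderConvergesTo_zero_iff {z : ℕ → X} (hz : Antitone z) (h0 : 0 ≤ z) :
    SigmaOrderConvergesTo z 0 ↔ IsGLB (range z) 0 := by
  have h0' : (0 : X) ∈ lowerBounds (range z) := forall_mem_range.2 h0
  constructor
  · rintro ⟨w, -, -, hw, hzw⟩
    refine ⟨h0', fun b hb => hw.2 <| forall_mem_range.2 fun m => ?_⟩
    obtain ⟨n, hn⟩ := (hzw m).exists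
    rw [sub_zero, abs_of_nonneg (h0 n)] at hn
    exact (hb (mem_range_self n)).trans hn
  · refine fun hglb => ⟨z, hz, h0, hglb, fun m => Filter.eventually_atTop.2 ⟨m, fun n hn => ?_⟩⟩
    rw [sub_zero, abs_of_nonneg (h0 n)]
    exact hz hn

theorem xDownZero_eq_inter :
    XDownZero X = {z | Antitone z ∧ 0 ≤ z} ∩ {z | SigmaOrderConvergesTo z 0} := by
  ext z
  constructor
  · rintro ⟨hz, h0, hglb⟩
    exact ⟨⟨hz, h0⟩, (hz.sigmaOrderConvergesTo_zero_iff h0).2 hglb⟩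
  · rintro ⟨⟨hz, h0⟩, hconv⟩
    exact ⟨hz, h0, (hz.sigmaOrderConvergesTo_zero_iff h0).1 hconv⟩

theorem compl_xDownZero_eq_union :
    (XDownZero X)ᶜ = {z | Antitone z ∧ 0 ≤ z}ᶜ ∪
      Prod.fst '' {p : (ℕ → X) × X | (∀ n, p.2 ≤ p.1 n) ∧ ¬p.2 ≤ 0} := by
  ext z
  simp only [mem_compl_iff, mem_union, mem_image, Prod.exists, mem_ofPred_eq]
  by_cases hC : Antitone z ∧ 0 ≤ z
  · have h0 : (0 : X) ∈ lowerBounds (range z) := forall_mem_range.2 hC.2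
    have hmem : z ∈ XDownZero X ↔ ∀ b ∈ lowerBounds (range z), b ≤ 0 :=
      ⟨fun h => h.2.2.2, fun h => ⟨hC.1, hC.2, h0, h⟩⟩
    simp [hmem, hC, mem_lowerBounds]
  · have hz : z ∉ XDownZero X := fun h => hC ⟨h.1, h.2.1⟩
    simp [hz, hC]

section Polish

variable [CompleteSpace X] [TopologicalSpace.SeparableSpace X]

theorem analyticSet_xDownZero
    (h : AnalyticSet {p : (ℕ → X) × X | SigmaOrderConvergesTo p.1 p.2}) :
    AnalyticSet (XDownZero X) := by
  rw [xDownZero_eq_inter]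
  exact isClosed_setOf_antitone_and_nonneg.analyticSet.inter <|
    h.preimage (continuous_id.prodMk continuous_const)

theorem analyticSet_compl_xDownZero : AnalyticSet (XDownZero X)ᶜ := by
  borelize X
  have hB : MeasurableSet {p : (ℕ → X) × X | (∀ n, p.2 ≤ p.1 n) ∧ ¬p.2 ≤ 0} := by
    rw [ofPred_and, ofPred_forall]
    exact (MeasurableSet.iInter fun n => (isClosed_le continuous_snd
      ((continuous_apply n).comp continuous_fst)).measurableSet).inter
      (isClosed_le continuous_snd continuous_const).measurableSet.compl
  rw [compl_xDownZero_eq_union]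
  exact isClosed_setOf_antitone_and_nonneg.measurableSet.compl.analyticSet.union <|
    hB.analyticSet.image_of_continuous continuous_fst

end Polish

end BanachLattice

theorem stmt16_general {X : Type*} [NormedAddCommGroup X] [Lattice X] [HasSolidNorm X]
    [IsOrderedAddMonoid X] [CompleteSpace X]
    [TopologicalSpace.SeparableSpace X]
    (hAnalytic : MeasureTheory.AnalyticSet
      {p : (ℕ → X) × X | SigmaOrderConvergesTo p.1 p.2}) :
    MeasurableSet[borel (ℕ → X)] (XDownZero X) := by
  borelize (ℕ → X)
  exact (analyticSet_xDownZero hAnalytic).measurableSet_of_compl analyticSet_compl_xDownZero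

theorem stmt16 {X : Type*} [NormedAddCommGroup X] [Lattice X] [HasSolidNorm X]
    [IsOrderedAddMonoid X] [NormedSpace ℝ X] [CompleteSpace X]
    [PosSMulStrictMono ℝ X] [PosSMulReflectLT ℝ X] [TopologicalSpace.SeparableSpace X]
    (hAnalytic : MeasureTheory.AnalyticSet
      {p : (ℕ → X) × X | SigmaOrderConvergesTo p.1 p.2}) :
    MeasurableSet[borel (ℕ → X)] (XDownZero X) :=
  stmt16_general hAnalytic
end
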